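/- For ν^ℤ-almost every ω, the Lyapunov exponent of the Schrödinger cocycle at energy E = 0 vanishes: lim_{n→∞} (1/n) log ‖T_{n,ω,0}‖ = 0, where T_{n,ω,0} = Π_{n,0} ⋯ Π_{1,0} is the n-step transfer matrix at energy 0 for the potential v_n = ξ_n − ξ_{n+1}. -/

import Mathlib

open MeasureTheory Filter

noncomputable section

/-- `P` is the two-sided infinite product `ν^ℤ` of copies of `ν`, characterized by its
values on cylinder sets. -/
def IsProductMeasureZ (ν : Measure ℝ) (P : Measure (ℤ → ℝ)) : Prop :=
  ∀ (s : Finset ℤ) (f : ℤ → Set ℝ), (∀ i ∈ s, MeasurableSet (f i)) →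
    P {ω | ∀ i ∈ s, ω i ∈ f i} = ∏ i ∈ s, ν (f i)

/-- The one-step transfer matrix `Π_{n,E} = [[E - v_n, -1], [1, 0]]` at energy `E = 0`
for the potential `v_n = ξ_n - ξ_{n+1}`. -/
def stepMat (ξ : ℤ → ℝ) (n : ℤ) : Matrix (Fin 2) (Fin 2) ℝ :=
  !![0 - (ξ n - ξ (n + 1)), -1; 1, 0]

/-- The `n`-step transfer matrix `T_{n,ω,0} = Π_{n,0} ⋯ Π_{1,0}`. -/
def transfer0 (ξ : ℤ → ℝ) : ℕ → Matrix (Fin 2) (Fin 2) ℝ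
  | 0 => 1
  | n + 1 => stepMat ξ ((n : ℤ) + 1) * transfer0 ξ n

/-- The operator norm (on the Euclidean space `ℝ²`) of a `2 × 2` real matrix. -/
def opNorm (A : Matrix (Fin 2) (Fin 2) ℝ) : ℝ :=
  ‖LinearMap.toContinuousLinearMap (Matrix.toEuclideanLin A)‖

/-!
Write `Π_n = A(ξ_{n+1}) L(ξ_n)` with `A(b) = [[b, -1], [1, 0]]` and the shear `L(a) = [[1, 0], [a, 1]]`.
Then `L(ξ_{n+1}) T_n = D(ξ_{n+1}) ⋯ D(ξ_2) L(ξ_1)` with `D(x) = L(x) A(x)`. For `x ∈ {0, 1}`, the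
eigenbasis `(1, φ), (1, 1 - φ)` of `[[0, 1], [1, 1]]` conjugates `D(x)` to `K · diag(φ^{±1}, φ^{∓1})`,
`K` the quarter turn; since `K` swaps the diagonal entries of a diagonal matrix, the product
collapses to `K^n · diag(φ^{s_n}, φ^{-s_n})` with `s_n = ∑_{i<n} (-1)^i (1 - 2ξ_{i+2})`. Hence
`1 ≤ ‖T_n‖ ≤ C φ^{|s_n|}`, the lower bound because `det T_n = 1`, while `s_n / n → 0` almost
surely by the strong law of large numbers, the increments of `s` being i.i.d. fair signs.
-/

open Matrix Real ProbabilityTheory Topology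
open scoped Matrix.Norms.L2Operator goldenRatio

def shear (a : ℝ) : Matrix (Fin 2) (Fin 2) ℝ := !![1, 0; a, 1]

def dimerMat (x : ℝ) : Matrix (Fin 2) (Fin 2) ℝ := !![x, -1; x ^ 2 + 1, -x]

def quarterTurn : Matrix (Fin 2) (Fin 2) ℝ := !![0, 1; -1, 0]

def hypDiag (t : ℝ) : Matrix (Fin 2) (Fin 2) ℝ := diagonal ![exp t, exp (-t)]

def goldenBasis : Matrix (Fin 2) (Fin 2) ℝ := !![1, 1; φ, 1 - φ]

def altIncr (i : ℕ) (x : ℝ) : ℝ := (-1) ^ i * (1 - 2 * x)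

def altSum (ξ : ℤ → ℝ) (n : ℕ) : ℝ := ∑ i ∈ Finset.range n, altIncr i (ξ (i + 2))

def fairCoin : Measure ℝ :=
  (1 / 2 : ENNReal) • Measure.dirac 0 + (1 / 2 : ENNReal) • Measure.dirac 1

lemma shear_mul_stepMat (ξ : ℤ → ℝ) (k : ℤ) :
    shear (ξ (k + 1)) * stepMat ξ k = dimerMat (ξ (k + 1)) * shear (ξ k) := by
  ext i j; fin_cases i <;> fin_cases j <;> simp [shear, stepMat, dimerMat] <;> ring

lemma shear_neg_mul_shear (a : ℝ) : shear (-a) * shear a = 1 := by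
  ext i j; fin_cases i <;> fin_cases j <;> simp [shear]

lemma hypDiag_zero : hypDiag 0 = 1 := by
  ext i j; fin_cases i <;> fin_cases j <;> simp [hypDiag]

lemma hypDiag_mul_hypDiag (s t : ℝ) : hypDiag s * hypDiag t = hypDiag (s + t) := by
  ext i j; fin_cases i <;> fin_cases j <;> simp [hypDiag, exp_add, add_comm]

lemma hypDiag_mul_quarterTurn (t : ℝ) : hypDiag t * quarterTurn = quarterTurn * hypDiag (-t) := by
  ext i j; fin_cases i <;> fin_cases j <;> simp [hypDiag, quarterTurn]

lemma hypDiag_mul_quarterTurn_pow (t : ℝ) (n : ℕ) :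
    hypDiag t * quarterTurn ^ n = quarterTurn ^ n * hypDiag ((-1) ^ n * t) := by
  induction n generalizing t with
  | zero => simp
  | succ n ih =>
    rw [pow_succ', ← mul_assoc, hypDiag_mul_quarterTurn, mul_assoc, ih, ← mul_assoc, pow_succ]
    congr 2; ring

lemma hypDiag_log_goldenRatio :
    hypDiag (log φ) = !![φ, 0; 0, φ - 1] ∧ hypDiag (-log φ) = !![φ - 1, 0; 0, φ] := by
  have hinv : φ⁻¹ = φ - 1 := by rw [inv_goldenRatio, ← one_sub_goldenConj]; ring
  simp only [hypDiag, exp_neg, neg_neg, exp_log goldenRatio_pos, hinv]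
  constructor <;> ext i j <;> fin_cases i <;> fin_cases j <;> rfl

lemma dimerMat_mul_goldenBasis {x : ℝ} (hx : x = 0 ∨ x = 1) :
    dimerMat x * goldenBasis = goldenBasis * (quarterTurn * hypDiag ((1 - 2 * x) * log φ)) := by
  obtain ⟨hpos, hneg⟩ := hypDiag_log_goldenRatio
  rcases hx with rfl | rfl <;>
    [rw [show (1 - 2 * 0) * log φ = log φ by ring, hpos];
     rw [show (1 - 2 * 1) * log φ = -log φ by ring, hneg]] <;>
  · simp only [dimerMat, goldenBasis, quarterTurn, mul_fin_two]
    ext i j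
    fin_cases i <;> fin_cases j <;> simp <;> linarith [goldenRatio_sq]

lemma quarterTurn_hypDiag_mul_pow (s t : ℝ) (n : ℕ) :
    quarterTurn * hypDiag s * (quarterTurn ^ n * hypDiag t) =
      quarterTurn ^ (n + 1) * hypDiag ((-1) ^ n * s + t) := by
  rw [mul_assoc, ← mul_assoc (hypDiag s), hypDiag_mul_quarterTurn_pow, mul_assoc,
    hypDiag_mul_hypDiag, ← mul_assoc, ← pow_succ']

lemma goldenBasis_mul_inv : goldenBasis * goldenBasis⁻¹ = 1 := by
  refine mul_nonsing_inv _ (isUnit_iff_ne_zero.2 ?_)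
  rw [goldenBasis, det_fin_two_of]
  linarith [one_lt_goldenRatio]

lemma shear_mul_transfer0 {ξ : ℤ → ℝ} (hξ : ∀ k, ξ k = 0 ∨ ξ k = 1) (n : ℕ) :
    shear (ξ (n + 1)) * transfer0 ξ n =
      goldenBasis * (quarterTurn ^ n * hypDiag (altSum ξ n * log φ)) * goldenBasis⁻¹ *
        shear (ξ 1) := by
  induction n with
  | zero =>
    simp [transfer0, altSum, hypDiag_zero, goldenBasis_mul_inv]
  | succ n ih =>
    have hk : ((n + 1 : ℕ) : ℤ) + 1 = (n + 1 : ℤ) + 1 := by push_cast; ring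
    have hsum : altSum ξ (n + 1) * log φ =
        (-1) ^ n * ((1 - 2 * ξ (n + 2)) * log φ) + altSum ξ n * log φ := by
      simp only [altSum, altIncr, Finset.sum_range_succ]; ring
    calc shear (ξ ((n + 1 : ℕ) + 1)) * transfer0 ξ (n + 1)
        = dimerMat (ξ (n + 2)) * (shear (ξ (n + 1)) * transfer0 ξ n) := by
          rw [transfer0, hk, ← mul_assoc, shear_mul_stepMat, mul_assoc, add_assoc,
            one_add_one_eq_two]
      _ = goldenBasis * (quarterTurn * hypDiag ((1 - 2 * ξ (n + 2)) * log φ) *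
            (quarterTurn ^ n * hypDiag (altSum ξ n * log φ))) * goldenBasis⁻¹ * shear (ξ 1) := by
          rw [ih]; simp only [← mul_assoc, dimerMat_mul_goldenBasis (hξ _)]
      _ = _ := by rw [quarterTurn_hypDiag_mul_pow, ← hsum]

lemma det_transfer0 (ξ : ℤ → ℝ) (n : ℕ) : (transfer0 ξ n).det = 1 := by
  induction n with
  | zero => simp [transfer0]
  | succ n ih => rw [transfer0, det_mul, ih, mul_one, stepMat, det_fin_two_of]; ring

lemma quarterTurn_mem_unitary : quarterTurn ∈ unitary (Matrix (Fin 2) (Fin 2) ℝ) := by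
  rw [mem_unitaryGroup_iff]
  ext i j; fin_cases i <;> fin_cases j <;> simp [quarterTurn, mul_apply, Fin.sum_univ_two]

lemma norm_quarterTurn_pow (n : ℕ) : ‖quarterTurn ^ n‖ = 1 :=
  CStarRing.norm_of_mem_unitary (pow_mem quarterTurn_mem_unitary n)

lemma norm_hypDiag_le (t : ℝ) : ‖hypDiag t‖ ≤ exp |t| := by
  rw [hypDiag, l2_opNorm_diagonal, pi_norm_le_iff_of_nonneg (exp_nonneg _)]
  intro i
  fin_cases i <;> simp [abs_of_pos (exp_pos _), le_abs_self, neg_le_abs]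

lemma adjugate_eq_quarterTurn_conj (A : Matrix (Fin 2) (Fin 2) ℝ) :
    adjugate A = quarterTurn * Aᴴ * quarterTurnᴴ := by
  ext i j
  simp only [adjugate_fin_two, mul_apply, Fin.sum_univ_two, conjTranspose_apply]
  fin_cases i <;> fin_cases j <;> simp [quarterTurn]

lemma norm_adjugate_le (A : Matrix (Fin 2) (Fin 2) ℝ) : ‖adjugate A‖ ≤ ‖A‖ := by
  have hQ : ‖quarterTurn‖ = 1 := by simpa using norm_quarterTurn_pow 1
  calc ‖adjugate A‖ ≤ ‖quarterTurn‖ * ‖Aᴴ‖ * ‖quarterTurnᴴ‖ := by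
        rw [adjugate_eq_quarterTurn_conj]; exact norm_mul₃_le
    _ = ‖A‖ := by rw [l2_opNorm_conjTranspose, l2_opNorm_conjTranspose, hQ, one_mul, mul_one]

lemma one_le_norm_of_det_eq_one {A : Matrix (Fin 2) (Fin 2) ℝ} (hA : A.det = 1) : 1 ≤ ‖A‖ := by
  have h : 1 ≤ ‖A‖ * ‖A‖ := by
    calc (1 : ℝ) = ‖A * adjugate A‖ := by simp [mul_adjugate, hA]
      _ ≤ ‖A‖ * ‖A‖ := norm_mul_le_of_le le_rfl (norm_adjugate_le A)
  nlinarith [norm_nonneg A]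

lemma transfer0_eq_conj {ξ : ℤ → ℝ} (hξ : ∀ k, ξ k = 0 ∨ ξ k = 1) (n : ℕ) :
    transfer0 ξ n = shear (-ξ (n + 1)) * goldenBasis *
      (quarterTurn ^ n * hypDiag (altSum ξ n * log φ)) * goldenBasis⁻¹ * shear (ξ 1) := by
  rw [← one_mul (transfer0 ξ n), ← shear_neg_mul_shear (ξ (n + 1)), mul_assoc,
    shear_mul_transfer0 hξ]
  simp only [mul_assoc]

lemma norm_transfer0_le {ξ : ℤ → ℝ} (hξ : ∀ k, ξ k = 0 ∨ ξ k = 1) :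
    ∃ c, ∀ n, ‖transfer0 ξ n‖ ≤ c * exp (|altSum ξ n * log φ|) := by
  refine ⟨max ‖shear 0‖ ‖shear (-1)‖ * ‖goldenBasis‖ * ‖goldenBasis⁻¹‖ * ‖shear (ξ 1)‖,
    fun n => ?_⟩
  have hshear : ‖shear (-ξ (n + 1))‖ ≤ max ‖shear 0‖ ‖shear (-1)‖ := by
    rcases hξ (n + 1) with h | h <;> simp [h]
  have hmid : ‖quarterTurn ^ n * hypDiag (altSum ξ n * log φ)‖ ≤ exp |altSum ξ n * log φ| := by
    refine (norm_mul_le _ _).trans ?_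
    rw [norm_quarterTurn_pow, one_mul]
    exact norm_hypDiag_le _
  rw [transfer0_eq_conj hξ]
  refine (norm_mul_le _ _).trans ?_
  calc _ ≤ max ‖shear 0‖ ‖shear (-1)‖ * ‖goldenBasis‖ * exp |altSum ξ n * log φ| *
        ‖goldenBasis⁻¹‖ * ‖shear (ξ 1)‖ := by
        gcongr
        refine (norm_mul_le _ _).trans ?_
        gcongr
        exact norm_mul₃_le.trans (by gcongr)
    _ = _ := by ring

lemma tendsto_one_div_mul_log_of_le_exp {f g : ℕ → ℝ} {c : ℝ} (hf : ∀ n, 1 ≤ f n)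
    (hfg : ∀ n, f n ≤ c * exp |g n|) (hg : Tendsto (fun n => g n / n) atTop (𝓝 0)) :
    Tendsto (fun n : ℕ => 1 / (n : ℝ) * log (f n)) atTop (𝓝 0) := by
  have hc : 0 < c := pos_of_mul_pos_left (one_pos.trans_le ((hf 0).trans (hfg 0))) (exp_pos _).le
  have hlog : ∀ n, log (f n) ≤ log c + |g n| := fun n => by
    rw [← log_exp |g n|, ← log_mul hc.ne' (exp_pos _).ne']
    exact log_le_log (one_pos.trans_le (hf n)) (hfg n)
  have hupper : Tendsto (fun n : ℕ => log c * (1 / (n : ℝ)) + |g n / n|) atTop (𝓝 0) := by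
    simpa using (tendsto_one_div_atTop_nhds_zero_nat.const_mul (log c)).add hg.abs
  refine tendsto_of_tendsto_of_tendsto_of_le_of_le tendsto_const_nhds hupper
    (fun n => mul_nonneg (by positivity) (log_nonneg (hf n))) (fun n => ?_)
  calc 1 / (n : ℝ) * log (f n) ≤ 1 / n * (log c + |g n|) := by gcongr; exact hlog n
    _ = log c * (1 / n) + |g n / n| := by rw [abs_div, Nat.abs_cast]; ring

lemma ae_fairCoin : ∀ᵐ x ∂fairCoin, x = 0 ∨ x = 1 := by
  rw [fairCoin, ae_add_measure_iff]
  exact ⟨Measure.ae_smul_measure (by simp [ae_dirac_eq]) _,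
    Measure.ae_smul_measure (by simp [ae_dirac_eq]) _⟩

lemma integrable_fairCoin (f : ℝ → ℝ) : Integrable f fairCoin :=
  ((integrable_dirac enorm_lt_top).smul_measure (by simp)).add_measure
    ((integrable_dirac enorm_lt_top).smul_measure (by simp))

lemma integral_fairCoin (f : ℝ → ℝ) : ∫ x, f x ∂fairCoin = (f 0 + f 1) / 2 := by
  rw [fairCoin, integral_add_measure ((integrable_dirac enorm_lt_top).smul_measure (by simp))
      ((integrable_dirac enorm_lt_top).smul_measure (by simp)),
    integral_smul_measure, integral_smul_measure, integral_dirac, integral_dirac]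
  simp; ring

lemma map_fairCoin {g : ℝ → ℝ} (hg : Measurable g) :
    fairCoin.map g =
      (1 / 2 : ENNReal) • Measure.dirac (g 0) + (1 / 2 : ENNReal) • Measure.dirac (g 1) := by
  rw [fairCoin, Measure.map_add _ _ hg, Measure.map_smul, Measure.map_smul,
    Measure.map_dirac' hg, Measure.map_dirac' hg]

namespace IsProductMeasureZ

variable {ν : Measure ℝ} {P : Measure (ℤ → ℝ)}

lemma measure_eval_preimage (hP : IsProductMeasureZ ν P) (k : ℤ) {s : Set ℝ}
    (hs : MeasurableSet s) : P ((fun ω => ω k) ⁻¹' s) = ν s := by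
  simpa [Set.preimage] using hP {k} (fun _ => s) (fun _ _ => hs)

lemma map_eval (hP : IsProductMeasureZ ν P) (k : ℤ) : P.map (fun ω => ω k) = ν :=
  Measure.ext fun _ hs => by
    rw [Measure.map_apply (measurable_pi_apply k) hs, hP.measure_eval_preimage k hs]

lemma iIndepFun_eval (hP : IsProductMeasureZ ν P) : iIndepFun (fun k (ω : ℤ → ℝ) => ω k) P := by
  rw [iIndepFun_iff_measure_inter_preimage_eq_mul]
  intro S sets hsets
  have hcyl : (⋂ i ∈ S, (fun ω : ℤ → ℝ => ω i) ⁻¹' sets i) = {ω | ∀ i ∈ S, ω i ∈ sets i} := by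
    ext; simp
  rw [hcyl, hP S sets hsets]
  exact Finset.prod_congr rfl fun i hi => (hP.measure_eval_preimage i (hsets i hi)).symm

lemma ae_eq_zero_or_one (hP : IsProductMeasureZ fairCoin P) :
    ∀ᵐ ω ∂P, ∀ k, ω k = 0 ∨ ω k = 1 :=
  ae_all_iff.2 fun k => ae_of_ae_map (measurable_pi_apply k).aemeasurable <| by
    rw [hP.map_eval]; exact ae_fairCoin

end IsProductMeasureZ

lemma measurable_altIncr (i : ℕ) : Measurable (altIncr i) :=
  measurable_const.mul (measurable_const.sub (measurable_id.const_mul 2))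

lemma map_altIncr_eval {P : Measure (ℤ → ℝ)} (hP : IsProductMeasureZ fairCoin P) (i : ℕ) :
    P.map (fun ω => altIncr i (ω (i + 2))) =
      (1 / 2 : ENNReal) • Measure.dirac ((-1) ^ i) +
        (1 / 2 : ENNReal) • Measure.dirac (-(-1) ^ i) := by
  rw [← Function.comp_def, ← Measure.map_map (measurable_altIncr i) (measurable_pi_apply _),
    hP.map_eval, map_fairCoin (measurable_altIncr i)]
  norm_num [altIncr]

lemma identDistrib_altIncr_eval {P : Measure (ℤ → ℝ)} (hP : IsProductMeasureZ fairCoin P)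
    (i : ℕ) :
    IdentDistrib (fun ω => altIncr i (ω (i + 2))) (fun ω => altIncr 0 (ω ((0 : ℕ) + 2))) P P := by
  refine ⟨(measurable_altIncr i).comp (measurable_pi_apply _) |>.aemeasurable,
    (measurable_altIncr 0).comp (measurable_pi_apply _) |>.aemeasurable, ?_⟩
  rw [map_altIncr_eval hP, map_altIncr_eval hP]
  rcases Nat.even_or_odd i with hi | hi
  · simp [hi.neg_one_pow]
  · simp [hi.neg_one_pow, add_comm]

lemma ae_tendsto_altSum_div {P : Measure (ℤ → ℝ)} (hP : IsProductMeasureZ fairCoin P) :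
    ∀ᵐ ω ∂P, Tendsto (fun n : ℕ => altSum ω n / n) atTop (𝓝 0) := by
  have hcomp : ∀ i : ℕ, (fun ω : ℤ → ℝ => altIncr i (ω (i + 2))) =
      altIncr i ∘ fun ω => ω (i + 2) := fun _ => rfl
  have hint : Integrable (fun ω : ℤ → ℝ => altIncr 0 (ω ((0 : ℕ) + 2))) P := by
    rw [hcomp, ← integrable_map_measure (measurable_altIncr 0).aestronglyMeasurable
      (measurable_pi_apply _).aemeasurable, hP.map_eval]
    exact integrable_fairCoin _
  have hindep : Pairwise fun i j : ℕ =>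
      IndepFun (fun ω : ℤ → ℝ => altIncr i (ω (i + 2))) (fun ω => altIncr j (ω (j + 2))) P :=
    fun i j hij => (hP.iIndepFun_eval.indepFun (by simpa using hij)).comp
      (measurable_altIncr i) (measurable_altIncr j)
  have hmean : ∫ ω, altIncr 0 (ω ((0 : ℕ) + 2)) ∂P = 0 := by
    rw [← integral_map (measurable_pi_apply _).aemeasurable
      (measurable_altIncr 0).aestronglyMeasurable, hP.map_eval, integral_fairCoin]
    norm_num [altIncr]
  filter_upwards [strong_law_ae_real _ hint hindep (identDistrib_altIncr_eval hP)] with ω hω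
  rwa [hmean] at hω

theorem lyapunov_vanishes_at_zero_general
    (ν : Measure ℝ)
    (hν : ν = (1 / 2 : ENNReal) • Measure.dirac (0 : ℝ)
            + (1 / 2 : ENNReal) • Measure.dirac (1 : ℝ))
    (P : Measure (ℤ → ℝ)) (hP : IsProductMeasureZ ν P) :
    ∀ᵐ ω ∂P, Tendsto (fun n : ℕ => (1 / (n : ℝ)) * Real.log (opNorm (transfer0 ω n)))
      atTop (nhds 0) := by
  subst hν
  filter_upwards [hP.ae_eq_zero_or_one, ae_tendsto_altSum_div hP] with ω hω hlim
  obtain ⟨c, hc⟩ := norm_transfer0_le hω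
  refine tendsto_one_div_mul_log_of_le_exp (fun n => one_le_norm_of_det_eq_one (det_transfer0 ω n))
    hc ?_
  simpa [mul_div_right_comm] using hlim.mul_const (log φ)

/-- Proposition 6.1, first part: for the Bernoulli(1/2) potential
`v_n = ξ_n - ξ_{n+1}`, the Lyapunov exponent at energy `E = 0` vanishes almost surely. -/
theorem lyapunov_vanishes_at_zero
    (ν : Measure ℝ)
    (hν : ν = (1 / 2 : ENNReal) • Measure.dirac (0 : ℝ)
            + (1 / 2 : ENNReal) • Measure.dirac (1 : ℝ))
    (P : Measure (ℤ → ℝ)) [IsProbabilityMeasure P] (hP : IsProductMeasureZ ν P) :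
    ∀ᵐ ω ∂P, Tendsto (fun n : ℕ => (1 / (n : ℝ)) * Real.log (opNorm (transfer0 ω n)))
      atTop (nhds 0) :=
  lyapunov_vanishes_at_zero_general ν hν P hP
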